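/- Let F̂(z) = Mz + G(z) be a C¹ lift of a torus map with G of class C¹, satisfying the expanding-block assumption with k = 1 (P∘M = m·P for an integer m with |m| > 1) and admitting an invariant expanding cone structure with constants α > 0 and K > 1 centered on the first coordinate direction. Let Φ̂(z) = lim_{n→∞} m^{−n} P(F̂^n(z)). Then for every x₀ ∈ ℝ and every y ∈ ℝ^{d−1} there is a unique point z ∈ ℝ^d with Qz = y and Φ̂(z) = x₀; consequently the fiber Φ̂^{−1}(x₀) is the graph of a continuous function h: ℝ^{d−1} → ℝ (i.e. Φ̂^{−1}(x₀) = {(h(y), y) : y ∈ ℝ^{d−1}}, up to the coordinate ordering). -/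

import Mathlib

open Filter Topology

noncomputable section

/-- Reinterpret a vector `Fin d → ℝ` as a point of Euclidean space `ℝ^d`. -/
def toEuc (d : ℕ) (v : Fin d → ℝ) : EuclideanSpace ℝ (Fin d) := WithLp.toLp 2 v

/-- Projection onto the last `d - k` coordinates of `ℝ^d`. -/
def projQ (d k : ℕ) (h : k ≤ d) (z : EuclideanSpace ℝ (Fin d)) :
    EuclideanSpace ℝ (Fin (d - k)) :=
  WithLp.toLp 2 fun j : Fin (d - k) => z ⟨k + j.val, by have := j.isLt; omega⟩

/-!
Let `P` be the first coordinate. Since `P (F w) = m P w + P (G w)` with `|P ∘ G| ≤ C`, the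
normalised iterates `m⁻ⁿ P (Fⁿ z)` converge to `Φ` uniformly at the geometric rate `|m|⁻ⁿ`; so `Φ`
is continuous and `|Φ - P| ≤ C / (|m| - 1)`, and on every horizontal line `Q z = y` it takes all
values. Two points of one horizontal line differ by a vector of the cone, so by the mean value
theorem `Fⁿ` stretches their `P`-distance by at least `Kⁿ`, whereas passing from `Φ` to the
`n`-th normalised iterate costs only `O(|m|⁻ⁿ)`. Hence `Φ` separates the points of a horizontal
line with a modulus independent of the line, which gives both uniqueness and continuity of the
solution `h y`.
-/

def ofPQ (d : ℕ) (x : ℝ) (y : EuclideanSpace ℝ (Fin (d - 1))) : EuclideanSpace ℝ (Fin d) :=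
  WithLp.toLp 2 fun i => if h : i.val = 0 then x else y ⟨i.val - 1, by omega⟩

section Coordinates

variable {d : ℕ} (hd : 0 < d)

@[simp]
theorem ofPQ_apply_zero (x : ℝ) (y : EuclideanSpace ℝ (Fin (d - 1))) :
    ofPQ d x y ⟨0, hd⟩ = x := by
  simp [ofPQ]

@[simp]
theorem projQ_ofPQ (x : ℝ) (y : EuclideanSpace ℝ (Fin (d - 1))) :
    projQ d 1 hd (ofPQ d x y) = y := by
  ext j
  simp [ofPQ, projQ]

theorem ofPQ_self (z : EuclideanSpace ℝ (Fin d)) : ofPQ d (z ⟨0, hd⟩) (projQ d 1 hd z) = z := by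
  ext i
  by_cases h : i.val = 0
  · simp only [ofPQ, projQ, h, dite_true]
    exact congrArg z (Fin.ext h.symm)
  · simp only [ofPQ, projQ, h, dite_false]
    exact congrArg z (Fin.ext (by simp only; omega))

end Coordinates

theorem projQ_sub {d k : ℕ} (h : k ≤ d) (z z' : EuclideanSpace ℝ (Fin d)) :
    projQ d k h (z - z') = projQ d k h z - projQ d k h z' :=
  rfl

theorem continuous_ofPQ {d : ℕ} :
    Continuous fun q : ℝ × EuclideanSpace ℝ (Fin (d - 1)) => ofPQ d q.1 q.2 := by
  refine (PiLp.continuous_toLp 2 _).comp (continuous_pi fun i => ?_)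
  split_ifs
  · exact continuous_fst
  · exact (EuclideanSpace.proj _).continuous.comp continuous_snd

section Semiconjugacy

variable {X : Type*} {f : X → X} {p : X → ℝ} {m C : ℝ} {Φ : X → ℝ}

theorem abs_sub_inv_pow_mul_iterate_le (hm : 1 < |m|) (hC : ∀ x, |p (f x) - m * p x| ≤ C)
    (hΦ : ∀ x, Tendsto (fun n : ℕ => (m ^ n)⁻¹ * p (f^[n] x)) atTop (𝓝 (Φ x)))
    (x : X) (n : ℕ) : |Φ x - (m ^ n)⁻¹ * p (f^[n] x)| ≤ C / (|m| - 1) / |m| ^ n := by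
  have hm0 : m ≠ 0 := by rintro rfl; norm_num at hm
  have hr : |m|⁻¹ < 1 := inv_lt_one_of_one_lt₀ hm
  have hstep : ∀ n : ℕ, dist ((m ^ n)⁻¹ * p (f^[n] x)) ((m ^ (n + 1))⁻¹ * p (f^[n + 1] x))
      ≤ C * |m|⁻¹ * |m|⁻¹ ^ n := by
    intro n
    have hdiff : (m ^ n)⁻¹ * p (f^[n] x) - (m ^ (n + 1))⁻¹ * p (f^[n + 1] x)
        = -((m ^ (n + 1))⁻¹ * (p (f (f^[n] x)) - m * p (f^[n] x))) := by
      rw [Function.iterate_succ_apply', pow_succ]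
      field_simp
      ring
    rw [Real.dist_eq, hdiff, abs_neg, abs_mul, abs_inv, abs_pow, mul_comm]
    calc |p (f (f^[n] x)) - m * p (f^[n] x)| * (|m| ^ (n + 1))⁻¹
        ≤ C * (|m| ^ (n + 1))⁻¹ := by gcongr; exact hC _
      _ = C * |m|⁻¹ * |m|⁻¹ ^ n := by rw [pow_succ, inv_pow]; ring
  have := dist_le_of_le_geometric_of_tendsto _ _ hr hstep (hΦ x) n
  rw [dist_comm, Real.dist_eq] at this
  convert this using 1
  have : |m| - 1 ≠ 0 := by linarith
  rw [inv_pow]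
  field_simp

theorem continuous_of_tendsto_inv_pow_mul_iterate [TopologicalSpace X] (hf : Continuous f)
    (hp : Continuous p) (hm : 1 < |m|) (hC : ∀ x, |p (f x) - m * p x| ≤ C)
    (hΦ : ∀ x, Tendsto (fun n : ℕ => (m ^ n)⁻¹ * p (f^[n] x)) atTop (𝓝 (Φ x))) :
    Continuous Φ := by
  have hunif : TendstoUniformly (fun n x => (m ^ n)⁻¹ * p (f^[n] x)) Φ atTop := by
    rw [Metric.tendstoUniformly_iff]
    intro ε hε
    have hlim : Tendsto (fun n : ℕ => C / (|m| - 1) / |m| ^ n) atTop (𝓝 0) :=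
      tendsto_const_nhds.div_atTop (tendsto_pow_atTop_atTop_of_one_lt hm)
    filter_upwards [hlim.eventually (gt_mem_nhds hε)] with n hn x
    rw [Real.dist_eq]
    exact (abs_sub_inv_pow_mul_iterate_le hm hC hΦ x n).trans_lt hn
  refine hunif.continuous (Frequently.of_forall fun n => ?_)
  exact continuous_const.mul (hp.comp (hf.iterate n))

end Semiconjugacy

section Cone

variable {E : Type*} [NormedAddCommGroup E] [NormedSpace ℝ E]

def ExpandsCone (f : E → E) (S : Set E) (p : E → ℝ) (K : ℝ) : Prop :=
  ∀ z, ∀ v ∈ S, fderiv ℝ f z v ∈ S ∧ K * |p v| ≤ |p (fderiv ℝ f z v)|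

variable {f g : E → E} {S : Set E} {p : E → ℝ} {K L : ℝ}

theorem ExpandsCone.comp (hg : ExpandsCone g S p L) (hf : ExpandsCone f S p K)
    (hgd : Differentiable ℝ g) (hfd : Differentiable ℝ f) (hL : 0 ≤ L) :
    ExpandsCone (g ∘ f) S p (L * K) := by
  intro z v hv
  obtain ⟨hfv, hfK⟩ := hf z v hv
  obtain ⟨hgv, hgL⟩ := hg (f z) _ hfv
  rw [fderiv_comp z (hgd _) (hfd z), ContinuousLinearMap.comp_apply]
  refine ⟨hgv, ?_⟩
  calc L * K * |p v| = L * (K * |p v|) := mul_assoc _ _ _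
    _ ≤ L * |p (fderiv ℝ f z v)| := by gcongr
    _ ≤ _ := hgL

theorem ExpandsCone.iterate (h : ExpandsCone f S p K) (hf : Differentiable ℝ f) (hK : 0 ≤ K)
    (n : ℕ) : ExpandsCone f^[n] S p (K ^ n) := by
  induction n with
  | zero =>
    intro z v hv
    simpa [fderiv_id] using hv
  | succ n ih =>
    rw [Function.iterate_succ', pow_succ']
    exact h.comp ih hf (hf.iterate n) hK

theorem ExpandsCone.mul_abs_sub_le {p : E →L[ℝ] ℝ} (h : ExpandsCone f S p K)
    (hf : Differentiable ℝ f) {z z' : E} (hzz' : z' - z ∈ S) :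
    K * |p z' - p z| ≤ |p (f z') - p (f z)| := by
  obtain ⟨c, -, hc⟩ := domain_mvt (f := fun x => p (f x)) (s := Set.univ)
    (f' := fun x => p.comp (fderiv ℝ f x))
    (fun x _ => (p.hasFDerivAt.comp x (hf x).hasFDerivAt).hasFDerivWithinAt)
    convex_univ (Set.mem_univ z) (Set.mem_univ z')
  rw [hc, ← map_sub]
  exact (h c _ hzz').2

theorem ExpandsCone.exists_pos_abs_sub_lt {p : E →L[ℝ] ℝ} {Φ : E → ℝ} {m B : ℝ}
    (h : ExpandsCone f S p K) (hf : Differentiable ℝ f) (hK : 1 < K) (hm : m ≠ 0)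
    (happrox : ∀ x (n : ℕ), |Φ x - (m ^ n)⁻¹ * p (f^[n] x)| ≤ B / |m| ^ n)
    {ε : ℝ} (hε : 0 < ε) :
    ∃ c > 0, ∀ z z', z' - z ∈ S → |Φ z' - Φ z| < c → |p z' - p z| < ε := by
  obtain ⟨n, hn⟩ := ((tendsto_pow_atTop_atTop_of_one_lt hK).eventually_gt_atTop
    (2 * B / ε)).exists
  have hmn : 0 < |m| ^ n := by positivity
  have hKn : 2 * B < K ^ n * ε := by rwa [div_lt_iff₀ hε] at hn
  refine ⟨(K ^ n * ε - 2 * B) / |m| ^ n, div_pos (by linarith) hmn, fun z z' hzz' hΦ => ?_⟩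
  by_contra! hge
  have hexp := (h.iterate hf (by linarith) n).mul_abs_sub_le (hf.iterate n) hzz'
  have hrescale : |p (f^[n] z') - p (f^[n] z)|
      = |m| ^ n * |(m ^ n)⁻¹ * p (f^[n] z') - (m ^ n)⁻¹ * p (f^[n] z)| := by
    rw [← mul_sub, abs_mul, ← mul_assoc, abs_inv, abs_pow, mul_inv_cancel₀ hmn.ne', one_mul]
  have happrox' : |(m ^ n)⁻¹ * p (f^[n] z') - (m ^ n)⁻¹ * p (f^[n] z)|
      ≤ |Φ z' - Φ z| + 2 * (B / |m| ^ n) := by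
    have h₁ := happrox z' n
    have h₂ := happrox z n
    rw [abs_le] at h₁ h₂ ⊢
    constructor <;> linarith [le_abs_self (Φ z' - Φ z), neg_abs_le (Φ z' - Φ z)]
  rw [lt_div_iff₀ hmn] at hΦ
  refine lt_irrefl (K ^ n * ε) ?_
  calc K ^ n * ε ≤ K ^ n * |p z' - p z| := by gcongr
    _ ≤ |p (f^[n] z') - p (f^[n] z)| := hexp
    _ = |m| ^ n * |(m ^ n)⁻¹ * p (f^[n] z') - (m ^ n)⁻¹ * p (f^[n] z)| := hrescale
    _ ≤ |m| ^ n * (|Φ z' - Φ z| + 2 * (B / |m| ^ n)) := by gcongr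
    _ = |Φ z' - Φ z| * |m| ^ n + 2 * B := by field_simp
    _ < K ^ n * ε := by linarith

end Cone

theorem surjective_of_abs_sub_le {g : ℝ → ℝ} (hg : Continuous g) {B : ℝ}
    (hB : ∀ x, |g x - x| ≤ B) : Function.Surjective g := by
  refine hg.surjective ?_ ?_
  · refine tendsto_atTop_mono (fun x => ?_) (tendsto_atTop_add_const_right _ (-B) tendsto_id)
    linarith [(abs_le.1 (hB x)).1, id_eq x]
  · refine tendsto_atBot_mono (fun x => ?_) (tendsto_atBot_add_const_right _ B tendsto_id)
    linarith [(abs_le.1 (hB x)).2, id_eq x]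

theorem exists_continuous_eq_iff_eq_of_abs_sub_le {Y : Type*} [TopologicalSpace Y]
    {Ψ : ℝ → Y → ℝ} (hΨ : Continuous (Function.uncurry Ψ)) {B : ℝ}
    (hB : ∀ x y, |Ψ x y - x| ≤ B)
    (hsep : ∀ ε > 0, ∃ c > 0, ∀ x x' y, |Ψ x' y - Ψ x y| < c → |x' - x| < ε) (x₀ : ℝ) :
    ∃ h : Y → ℝ, Continuous h ∧ ∀ x y, Ψ x y = x₀ ↔ x = h y := by
  have hinj : ∀ y, Function.Injective (Ψ · y) := by
    intro y x x' hxx'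
    refine (eq_of_forall_dist_le fun ε hε => ?_).symm
    obtain ⟨c, hc, hsep⟩ := hsep ε hε
    rw [Real.dist_eq]
    exact (hsep x x' y (by simpa [hxx'] using hc)).le
  have hsurj : ∀ y, ∃ x, Ψ x y = x₀ := fun y =>
    surjective_of_abs_sub_le (hΨ.comp (Continuous.prodMk_left y)) (hB · y) x₀
  choose h hh using hsurj
  have hiff : ∀ x y, Ψ x y = x₀ ↔ x = h y := fun x y =>
    ⟨fun hx => hinj y (hx.trans (hh y).symm), fun hx => hx ▸ hh y⟩
  refine ⟨h, continuous_iff_continuousAt.2 fun y => Metric.tendsto_nhds.2 fun ε hε => ?_, hiff⟩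
  obtain ⟨c, hc, hsep⟩ := hsep ε hε
  have hcont : ContinuousAt (Ψ (h y)) y := (hΨ.comp (Continuous.prodMk_right (h y))).continuousAt
  filter_upwards [Metric.tendsto_nhds.1 hcont c hc] with y' hy'
  rw [Real.dist_eq] at hy' ⊢
  rw [hh y, ← hh y'] at hy'
  rw [abs_sub_comm]
  exact hsep _ _ _ hy'

theorem fiber_eq_graph {d : ℕ} (hd : 0 < d) {Φ : EuclideanSpace ℝ (Fin d) → ℝ}
    (hΦ : Continuous Φ) {B : ℝ} (hB : ∀ z, |Φ z - z ⟨0, hd⟩| ≤ B)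
    (hsep : ∀ ε > 0, ∃ c > 0, ∀ z z', projQ d 1 hd z = projQ d 1 hd z' →
      |Φ z' - Φ z| < c → |z' ⟨0, hd⟩ - z ⟨0, hd⟩| < ε) (x₀ : ℝ) :
    (∀ y : EuclideanSpace ℝ (Fin (d - 1)),
        ∃! z : EuclideanSpace ℝ (Fin d), projQ d 1 hd z = y ∧ Φ z = x₀) ∧
      ∃ h : EuclideanSpace ℝ (Fin (d - 1)) → ℝ, Continuous h ∧
        ∀ z : EuclideanSpace ℝ (Fin d),
          Φ z = x₀ ↔ z ⟨0, hd⟩ = h (projQ d 1 hd z) := by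
  obtain ⟨h, hhc, hh⟩ := exists_continuous_eq_iff_eq_of_abs_sub_le
    (Ψ := fun x y => Φ (ofPQ d x y)) (hΦ.comp continuous_ofPQ)
    (fun x y => by simpa using hB (ofPQ d x y))
    (fun ε hε => by
      obtain ⟨c, hc, hsep⟩ := hsep ε hε
      exact ⟨c, hc, fun x x' y hxx' => by simpa [hd] using hsep _ _ (by simp) hxx'⟩) x₀
  have hgraph : ∀ z, Φ z = x₀ ↔ z ⟨0, hd⟩ = h (projQ d 1 hd z) := fun z => by
    rw [← hh, ofPQ_self]
  refine ⟨fun y => ⟨ofPQ d (h y) y, by simp [hh], ?_⟩, h, hhc, hgraph⟩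
  rintro z ⟨rfl, hz⟩
  nth_rewrite 1 [← ofPQ_self hd z]
  rw [(hgraph z).1 hz]

theorem stmt14_general (d : ℕ) (hd : 0 < d)
    (M : Matrix (Fin d) (Fin d) ℝ)
    (G : EuclideanSpace ℝ (Fin d) → EuclideanSpace ℝ (Fin d))
    (hGC1 : ContDiff ℝ 1 G) (hGbdd : ∃ C, ∀ z, ‖G z‖ ≤ C)
    (F : EuclideanSpace ℝ (Fin d) → EuclideanSpace ℝ (Fin d))
    (hF : ∀ z, F z = toEuc d (M.mulVec z) + G z)
    (m : ℤ) (hm : 1 < |m|)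
    (hPM : ∀ z : EuclideanSpace ℝ (Fin d),
      toEuc d (M.mulVec z) ⟨0, hd⟩ = (m : ℝ) * z ⟨0, hd⟩)
    (α K : ℝ) (hα : 0 < α) (hK : 1 < K)
    (hcone : ∀ (z v : EuclideanSpace ℝ (Fin d)),
      ‖projQ d 1 hd v‖ ≤ α * |v ⟨0, hd⟩| →
        ‖projQ d 1 hd (fderiv ℝ F z v)‖ ≤ α * |(fderiv ℝ F z v) ⟨0, hd⟩| ∧
        K * |v ⟨0, hd⟩| ≤ |(fderiv ℝ F z v) ⟨0, hd⟩|)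
    (Φ : EuclideanSpace ℝ (Fin d) → ℝ)
    (hΦ : ∀ z, Tendsto (fun n : ℕ => ((m : ℝ) ^ n)⁻¹ * (F^[n] z) ⟨0, hd⟩)
      atTop (𝓝 (Φ z)))
    :
    ∀ x₀ : ℝ,
      (∀ y : EuclideanSpace ℝ (Fin (d - 1)),
        ∃! z : EuclideanSpace ℝ (Fin d), projQ d 1 hd z = y ∧ Φ z = x₀) ∧
      ∃ h : EuclideanSpace ℝ (Fin (d - 1)) → ℝ, Continuous h ∧
        ∀ z : EuclideanSpace ℝ (Fin d),
          Φ z = x₀ ↔ z ⟨0, hd⟩ = h (projQ d 1 hd z) := by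
  obtain ⟨C, hC⟩ := hGbdd
  set P : EuclideanSpace ℝ (Fin d) →L[ℝ] ℝ := EuclideanSpace.proj ⟨0, hd⟩
  have hm' : 1 < |(m : ℝ)| := by exact_mod_cast hm
  have hFd : Differentiable ℝ F := by
    rw [show F = fun z => Matrix.toEuclideanCLM (𝕜 := ℝ) M z + G z from funext hF]
    exact (ContinuousLinearMap.differentiable _).add (hGC1.differentiable one_ne_zero)
  have hshadow : ∀ w, |P (F w) - m * P w| ≤ C := fun w => by
    simpa [P, hF, ← hPM w] using (PiLp.norm_apply_le (G w) _).trans (hC w)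
  have happrox := abs_sub_inv_pow_mul_iterate_le (p := P) hm' hshadow hΦ
  have hexp : ExpandsCone F {v | ‖projQ d 1 hd v‖ ≤ α * |v ⟨0, hd⟩|} P K := hcone
  refine fiber_eq_graph hd
    (continuous_of_tendsto_inv_pow_mul_iterate hFd.continuous P.continuous hm' hshadow hΦ)
    (fun z => by simpa [P] using happrox z 0) (fun ε hε => ?_)
  obtain ⟨c, hc, hsep⟩ := hexp.exists_pos_abs_sub_lt hFd hK (abs_pos.1 (one_pos.trans hm')) happrox hε
  refine ⟨c, hc, fun z z' hzz' => hsep z z' ?_⟩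
  simp only [Set.mem_ofPred_eq, projQ_sub, hzz', sub_self, norm_zero]
  positivity

/--
Let `F̂(z) = Mz + G(z)` be a C¹ lift of a torus map with `G` of class
C¹, satisfying the expanding-block assumption with `k = 1` (so `P(z) = z₁`,
`P∘M = m·P` for an integer `m` with `|m| > 1`), and admitting an invariant expanding cone
structure with constants `α > 0` and `K > 1` centered on the first coordinate direction.
Let `Φ̂(z) = lim_{n→∞} m^{−n} P(F̂ⁿ(z))`. Then for every `x₀ ∈ ℝ` and every
`y ∈ ℝ^{d−1}` there is a unique point `z ∈ ℝ^d` with `Qz = y` and `Φ̂(z) = x₀`;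
consequently the fiber `Φ̂⁻¹(x₀)` is the graph of a continuous function
`h : ℝ^{d−1} → ℝ` (i.e. `Φ̂⁻¹(x₀) = {(h(y), y) : y ∈ ℝ^{d−1}}`, up to the coordinate
ordering).
-/
theorem stmt14 (d : ℕ) (hd : 0 < d)
    (M : Matrix (Fin d) (Fin d) ℝ) (hMint : ∀ i j, ∃ n : ℤ, M i j = (n : ℝ))
    (G : EuclideanSpace ℝ (Fin d) → EuclideanSpace ℝ (Fin d))
    (hGC1 : ContDiff ℝ 1 G) (hGbdd : ∃ C, ∀ z, ‖G z‖ ≤ C)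
    (hGper : ∀ (z : EuclideanSpace ℝ (Fin d)) (p : Fin d → ℤ),
      G (z + toEuc d fun i => (p i : ℝ)) = G z)
    (F : EuclideanSpace ℝ (Fin d) → EuclideanSpace ℝ (Fin d))
    (hF : ∀ z, F z = toEuc d (M.mulVec z) + G z)
    (m : ℤ) (hm : 1 < |m|)
    (hPM : ∀ z : EuclideanSpace ℝ (Fin d),
      toEuc d (M.mulVec z) ⟨0, hd⟩ = (m : ℝ) * z ⟨0, hd⟩)
    (α K : ℝ) (hα : 0 < α) (hK : 1 < K)
    (hcone : ∀ (z v : EuclideanSpace ℝ (Fin d)),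
      ‖projQ d 1 hd v‖ ≤ α * |v ⟨0, hd⟩| →
        ‖projQ d 1 hd (fderiv ℝ F z v)‖ ≤ α * |(fderiv ℝ F z v) ⟨0, hd⟩| ∧
        K * |v ⟨0, hd⟩| ≤ |(fderiv ℝ F z v) ⟨0, hd⟩|)
    (Φ : EuclideanSpace ℝ (Fin d) → ℝ)
    (hΦ : ∀ z, Tendsto (fun n : ℕ => ((m : ℝ) ^ n)⁻¹ * (F^[n] z) ⟨0, hd⟩)
      atTop (𝓝 (Φ z)))
    :
    ∀ x₀ : ℝ,
      (∀ y : EuclideanSpace ℝ (Fin (d - 1)),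
        ∃! z : EuclideanSpace ℝ (Fin d), projQ d 1 hd z = y ∧ Φ z = x₀) ∧
      ∃ h : EuclideanSpace ℝ (Fin (d - 1)) → ℝ, Continuous h ∧
        ∀ z : EuclideanSpace ℝ (Fin d),
          Φ z = x₀ ↔ z ⟨0, hd⟩ = h (projQ d 1 hd z) :=
  stmt14_general d hd M G hGC1 hGbdd F hF m hm hPM α K hα hK hcone Φ hΦ
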